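/- arXiv:2506.01054 — 3 statements merged into one kernel-verified Lean document; each statement's English description precedes it below -/
import Mathlib

section
/- Summing in decreasing order does not minimize the floating-point sum: in a binary floating-point system with p-bit significands (p ≥ 2) and round-to-nearest, there exist representable numbers x₁,…,xₙ such that the left-to-right floating-point sum in decreasing order is strictly greater than the floating-point sum under some other ordering. -/
/-- Binary floating-point numbers with `p`-bit significands and unbounded exponent:
reals of the form `m * 2 ^ e` with `|m| < 2 ^ p`. -/
def Fp (p : ℕ) : Set ℝ :=
  {x | ∃ m e : ℤ, |m| < 2 ^ p ∧ x = (m : ℝ) * (2 : ℝ) ^ e}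

/-- `fl` is a round-to-nearest rounding into the representable set `F`. -/
def IsNearestRounding (F : Set ℝ) (fl : ℝ → ℝ) : Prop :=
  ∀ s : ℝ, fl s ∈ F ∧ ∀ f ∈ F, |s - fl s| ≤ |s - f|

/-- Left-to-right floating-point summation: `s₁ = a₁`, `s_{k+1} = fl (s_k + a_{k+1})`. -/
noncomputable def lsum (fl : ℝ → ℝ) : List ℝ → ℝ
  | [] => 0
  | x :: xs => xs.foldl (fun s a => fl (s + a)) x

lemma mem_Fp (p : ℕ) (m e : ℤ) (h : |m| < 2 ^ p) : (m : ℝ) * (2:ℝ) ^ e ∈ Fp p :=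
  ⟨m, e, h, rfl⟩

lemma four_le (p : ℕ) (hp : 2 ≤ p) : (4:ℝ) ≤ 2 ^ p := by
  calc (4:ℝ) = 2 ^ 2 := by norm_num
  _ ≤ 2 ^ p := by exact pow_le_pow_right₀ (by norm_num) hp

/-- Gap structure of `Fp p` around `2^p`. -/
lemma four_leZ (p : ℕ) (hp : 2 ≤ p) : (4:ℤ) ≤ 2 ^ p := by
  calc (4:ℤ) = 2^2 := by norm_num
  _ ≤ 2 ^ p := pow_le_pow_right₀ (by norm_num) hp

lemma gap (p : ℕ) (hp : 2 ≤ p) {f : ℝ} (hf : f ∈ Fp p) :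
    f ≤ 2 ^ p - 1 ∨ f = 2 ^ p ∨ 2 ^ p + 2 ≤ f := by
  obtain ⟨m, e, hm, rfl⟩ := hf
  have hm' : (m : ℝ) ≤ 2 ^ p - 1 := by
    have : m ≤ 2 ^ p - 1 := by
      have := (abs_lt.mp hm).2; omega
    calc (m:ℝ) ≤ ((2:ℤ)^p - 1 : ℤ) := by exact_mod_cast this
    _ = 2 ^ p - 1 := by push_cast; ring
  have h4 : (4:ℝ) ≤ 2 ^ p := four_le p hp
  rcases lt_trichotomy e 0 with he | he | he
  · left
    have h2e : (2:ℝ) ^ e ≤ 2 ^ (-1 : ℤ) := zpow_le_zpow_right₀ (by norm_num) (by omega)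
    have h2e' : (0:ℝ) < (2:ℝ) ^ e := by positivity
    have : (2:ℝ) ^ (-1 : ℤ) = 1/2 := by norm_num
    rw [this] at h2e
    nlinarith [mul_le_mul_of_nonneg_right hm' (le_of_lt h2e')]
  · left
    subst he; simpa using hm'
  · -- e ≥ 1 : f is an even integer
    have key : (m : ℝ) * (2:ℝ) ^ e = 2 * ((m * 2 ^ (e-1).toNat : ℤ) : ℝ) := by
      have : (2:ℝ) ^ e = 2 * (2:ℝ) ^ ((e-1).toNat : ℤ) := by
        rw [← zpow_one_add₀ (by norm_num : (2:ℝ) ≠ 0)]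
        congr 1; omega
      rw [this]; push_cast [zpow_natCast]; ring
    set k : ℤ := m * 2 ^ (e-1).toNat with hk
    have hM : (2:ℝ) ^ p = 2 * (((2:ℤ) ^ (p-1) : ℤ) : ℝ) := by
      push_cast
      rw [← pow_succ']
      congr 1; omega
    rcases lt_trichotomy k ((2:ℤ) ^ (p-1)) with h | h | h
    · left
      have : k ≤ (2:ℤ) ^ (p-1) - 1 := by omega
      have : (k:ℝ) ≤ (((2:ℤ)^(p-1) : ℤ) : ℝ) - 1 := by exact_mod_cast this
      rw [key, hM] at *
      linarith
    · right; left; rw [key, hM, h]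
    · right; right
      have : (2:ℤ) ^ (p-1) + 1 ≤ k := by omega
      have : (((2:ℤ)^(p-1) : ℤ) : ℝ) + 1 ≤ (k:ℝ) := by exact_mod_cast this
      rw [key, hM]; linarith

lemma fl_fix {F : Set ℝ} {fl : ℝ → ℝ} (h : IsNearestRounding F fl) {x : ℝ} (hx : x ∈ F) :
    fl x = x := by
  have h1 := (h x).2 x hx
  simp only [sub_self, abs_zero] at h1
  have := abs_nonneg (x - fl x)
  have : |x - fl x| = 0 := le_antisymm h1 this
  have := abs_eq_zero.mp this
  linarith

/-- Summing in decreasing order does not minimize the floating-point sum: there is a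
decreasingly sorted list of representable numbers whose left-to-right floating-point
sum is strictly greater than that of some other ordering. -/
theorem decreasing_order_not_minimal (p : ℕ) (hp : 2 ≤ p) (fl : ℝ → ℝ)
    (hfl : IsNearestRounding (Fp p) fl) :
    ∃ l l' : List ℝ, l.Perm l' ∧ (∀ x ∈ l, x ∈ Fp p) ∧
      l.Pairwise (fun x y => y ≤ x) ∧ lsum fl l' < lsum fl l := by
  set M : ℝ := 2 ^ p with hM
  have h4 : (4:ℝ) ≤ M := four_le p hp
  have hMF : M ∈ Fp p := by
    have := mem_Fp p 1 p (by rw [abs_of_pos (by norm_num)]; linarith [four_leZ p hp])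
    simpa [hM, zpow_natCast] using this
  have hbF : (3/2 : ℝ) ∈ Fp p := by
    have h3 : |(3:ℤ)| < 2 ^ p := by
      rw [abs_of_pos (by norm_num)]; linarith [four_leZ p hp]
    have := mem_Fp p 3 (-1) h3
    convert this using 1
    norm_num
  have hcF : (-(3/4) : ℝ) ∈ Fp p := by
    have h3 : |(-3:ℤ)| < 2 ^ p := by
      rw [abs_of_neg (by norm_num)]; linarith [four_leZ p hp]
    have := mem_Fp p (-3) (-2) h3
    convert this using 1
    norm_num
  have hM2F : M + 2 ∈ Fp p := by
    have hma : |(2:ℤ) ^ (p-1) + 1| < 2 ^ p := by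
      have h1 : (2:ℤ) ^ (p - 1) * 2 = 2 ^ p := by
        rw [← pow_succ]; congr 1; omega
      have h2 : (2:ℤ) ≤ 2 ^ (p-1) := by
        calc (2:ℤ) = 2^1 := by norm_num
        _ ≤ 2 ^ (p-1) := pow_le_pow_right₀ (by norm_num) (by omega)
      rw [abs_of_pos (by positivity)]; omega
    have := mem_Fp p ((2:ℤ)^(p-1) + 1) 1 hma
    convert this using 1
    push_cast
    rw [hM]
    have : (2:ℝ) ^ (p - 1) * 2 = 2 ^ p := by
      rw [← pow_succ]; congr 1; omega
    rw [zpow_one]; linarith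
  -- the three rounding facts
  have r1 : fl (M + 3/2) = M + 2 := by
    have h1 := (hfl (M + 3/2)).2 (M + 2) hM2F
    have h2 : |M + 3/2 - (M + 2)| = 1/2 := by rw [show M + 3/2 - (M+2) = -(1/2) by ring]; norm_num
    rw [h2] at h1
    have hb := abs_le.mp h1
    rcases gap p hp (hfl (M + 3/2)).1 with h | h | h
    · rw [hM] at h; linarith [hb.2]
    · rw [hM] at h ⊢; rw [h] at hb; norm_num at hb; linarith [hb.2]
    · rw [hM] at h ⊢; linarith [hb.1]
  have r2 : fl (M + 2 + -(3/4)) = M + 2 := by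
    have h1 := (hfl (M + 2 + -(3/4))).2 (M + 2) hM2F
    have h2 : |M + 2 + -(3/4) - (M + 2)| = 3/4 := by
      rw [show M + 2 + -(3/4) - (M+2) = -(3/4) by ring]; norm_num
    rw [h2] at h1
    have hb := abs_le.mp h1
    rcases gap p hp (hfl (M + 2 + -(3/4))).1 with h | h | h
    · rw [hM] at h; linarith [hb.2]
    · rw [hM] at h ⊢; rw [h] at hb; norm_num at hb; linarith
    · rw [hM] at h ⊢; linarith [hb.1]
  have r3 : fl (3/4 + M) = M := by
    have h1 := (hfl (3/4 + M)).2 M hMF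
    have h2 : |3/4 + M - M| = 3/4 := by rw [show 3/4 + M - M = (3/4:ℝ) by ring]; norm_num
    rw [h2] at h1
    have hb := abs_le.mp h1
    rcases gap p hp (hfl (3/4 + M)).1 with h | h | h
    · rw [hM] at h; linarith [hb.2]
    · rw [hM] at h ⊢; rw [h]
    · rw [hM] at h ⊢; linarith [hb.1]
  have hb2F : (3/4 : ℝ) ∈ Fp p := by
    have h3 : |(3:ℤ)| < 2 ^ p := by
      rw [abs_of_pos (by norm_num)]; linarith [four_leZ p hp]
    have := mem_Fp p 3 (-2) h3
    convert this using 1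
    norm_num
  have r0 : fl (3/2 + -(3/4)) = 3/4 := by
    have he : (3/2 : ℝ) + -(3/4) = 3/4 := by norm_num
    rw [he, fl_fix hfl hb2F]
  refine ⟨[M, 3/2, -(3/4)], [3/2, -(3/4), M], ?_, ?_, ?_, ?_⟩
  · simpa using List.perm_append_comm (l₁ := [M]) (l₂ := [3/2, -(3/4)])
  · intro x hx
    simp only [List.mem_cons, List.not_mem_nil, or_false] at hx
    rcases hx with rfl | rfl | rfl
    · exact hMF
    · exact hbF
    · exact hcF
  · refine List.Pairwise.cons ?_ (List.Pairwise.cons ?_ (List.pairwise_singleton _ _))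
    · intro y hy
      simp only [List.mem_cons, List.not_mem_nil, or_false] at hy
      rcases hy with rfl | rfl <;> linarith
    · intro y hy
      simp only [List.mem_cons, List.not_mem_nil, or_false] at hy
      subst hy; norm_num
  · show fl (fl (3/2 + -(3/4)) + M) < fl (fl (M + 3/2) + -(3/4))
    rw [r0, r3, r1, r2]
    linarith
end

section
/- Summing in decreasing order of absolute value does not minimize the floating-point sum: in a binary floating-point system with p-bit significands (p ≥ 2) and round-to-nearest, there exist representable numbers x₁,…,xₙ such that summing them left-to-right in order of decreasing absolute value gives a strictly larger result than some other ordering. -/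
lemma fl_fixes {F : Set ℝ} {fl : ℝ → ℝ} (hfl : IsNearestRounding F fl)
    {s : ℝ} (hs : s ∈ F) : fl s = s := by
  have h := (hfl s).2 s hs
  simp at h
  linarith

/-- Any representable number strictly above `2^p` is at least `2^p + 2`. -/
lemma fp_gap (p : ℕ) (hp : 2 ≤ p) {x : ℝ} (hx : x ∈ Fp p)
    (hgt : (2:ℝ)^p < x) : (2:ℝ)^p + 2 ≤ x := by
  obtain ⟨m, e, hm, rfl⟩ := hx
  have h2e : (0:ℝ) < (2:ℝ)^e := zpow_pos (by norm_num) e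
  have hmR : (m:ℝ) < (2:ℝ)^p := by
    have : (m:ℤ) < 2^p := lt_of_abs_lt hm
    calc (m:ℝ) < ((2^p : ℤ) : ℝ) := by exact_mod_cast this
    _ = (2:ℝ)^p := by push_cast; ring
  have hm0 : 0 < m := by
    by_contra h
    push_neg at h
    have : (m:ℝ) ≤ 0 := by exact_mod_cast h
    have hxle : (m:ℝ) * (2:ℝ)^e ≤ 0 := mul_nonpos_of_nonpos_of_nonneg this (le_of_lt h2e)
    have : (0:ℝ) < (2:ℝ)^p := by positivity
    linarith
  rcases le_or_gt e 0 with he | he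
  · exfalso
    have h1 : (2:ℝ)^e ≤ 1 := zpow_le_one_of_nonpos₀ (by norm_num) he
    have hm1 : (1:ℝ) ≤ (m:ℝ) := by exact_mod_cast hm0
    nlinarith
  · obtain ⟨d, rfl⟩ : ∃ d : ℕ, e = (d:ℤ) + 1 := ⟨(e - 1).toNat, by omega⟩
    obtain ⟨q, rfl⟩ : ∃ q : ℕ, p = q + 2 := ⟨p - 2, by omega⟩
    have hpow : (2:ℝ)^((d:ℤ) + 1) = ((2^d : ℤ) : ℝ) * 2 := by
      rw [zpow_add₀ (by norm_num : (2:ℝ) ≠ 0), zpow_natCast]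
      push_cast; ring
    rw [hpow] at hgt ⊢
    set k : ℤ := m * 2^d with hk
    have hcast : (m:ℝ) * (((2^d : ℤ) : ℝ) * 2) = ((2*k : ℤ) : ℝ) := by
      push_cast [hk]; ring
    rw [hcast] at hgt ⊢
    have hpR : (2:ℝ)^(q+2) = (((2:ℤ)^(q+2) : ℤ) : ℝ) := by push_cast; ring
    rw [hpR] at hgt ⊢
    have hZ : (2:ℤ)^(q+2) < 2*k := by exact_mod_cast hgt
    have h2 : (2:ℤ)^(q+2) = 2 * 2^(q+1) := by ring
    have hk1 : 2^(q+1) + 1 ≤ k := by omega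
    have : (2:ℤ)^(q+2) + 2 ≤ 2*k := by omega
    calc (((2:ℤ)^(q+2) : ℤ) : ℝ) + 2 = (((2:ℤ)^(q+2) + 2 : ℤ) : ℝ) := by push_cast; ring
    _ ≤ ((2*k : ℤ) : ℝ) := by exact_mod_cast this

/-- Summing in decreasing order of absolute value does not minimize the floating-point
sum: there is a list of representable numbers sorted by decreasing absolute value whose
left-to-right floating-point sum is strictly greater than that of some other ordering. -/
theorem decreasing_abs_order_not_minimal (p : ℕ) (hp : 2 ≤ p) (fl : ℝ → ℝ)
    (hfl : IsNearestRounding (Fp p) fl) :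
    ∃ l l' : List ℝ, l.Perm l' ∧ (∀ x ∈ l, x ∈ Fp p) ∧
      l.Pairwise (fun x y => |y| ≤ |x|) ∧ lsum fl l' < lsum fl l := by
  set M : ℝ := (2:ℝ)^p with hM
  have h4le : (4:ℝ) ≤ M := by
    have : (2:ℝ)^2 ≤ (2:ℝ)^p := pow_le_pow_right₀ (by norm_num) hp
    norm_num at this
    rw [hM]
    exact this
  have h4leZ : (4:ℤ) ≤ 2^p := by
    have : (2:ℤ)^2 ≤ (2:ℤ)^p := pow_le_pow_right₀ (by norm_num) hp
    norm_num at this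
    exact this
  -- memberships
  have hMF : M ∈ Fp p := by
    refine ⟨1, (p:ℤ), by simpa using lt_of_lt_of_le (by norm_num) h4leZ, ?_⟩
    rw [zpow_natCast]; simp [hM]
  have h32F : (3/2 : ℝ) ∈ Fp p := by
    refine ⟨3, -1, by rw [abs_of_nonneg (by norm_num)]; omega, ?_⟩
    norm_num
  have h34F : (3/4 : ℝ) ∈ Fp p := by
    refine ⟨3, -2, by rw [abs_of_nonneg (by norm_num)]; omega, ?_⟩
    rw [show ((-2:ℤ)) = -1 + -1 by ring, zpow_add₀ (by norm_num : (2:ℝ) ≠ 0)]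
    norm_num
  have hn34F : (-(3/4) : ℝ) ∈ Fp p := by
    obtain ⟨m, e, hm, hx⟩ := h34F
    exact ⟨-m, e, by simpa using hm, by push_cast; rw [neg_mul, ← hx]⟩
  have hM2F : M + 2 ∈ Fp p := by
    obtain ⟨q, hq⟩ : ∃ q : ℕ, p = q + 2 := ⟨p - 2, by omega⟩
    refine ⟨2^(q+1) + 1, 1, ?_, ?_⟩
    · rw [abs_of_nonneg (by positivity), hq]
      have : (2:ℤ)^(q+2) = 2 * 2^(q+1) := by ring
      have h1 : (2:ℤ) ≤ 2^(q+1) := by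
        calc (2:ℤ) = 2^1 := by norm_num
        _ ≤ 2^(q+1) := pow_le_pow_right₀ (by norm_num) (by omega)
      omega
    · have : ((2:ℤ)^(q+1) + 1 : ℤ) * (2:ℝ)^(1:ℤ) = (2:ℝ)^(q+2) + 2 := by
        push_cast
        rw [zpow_one]
        ring
      rw [this, hM, hq]
  -- step 1 of l : fl (M + 3/2) = M + 2
  have hA : fl (M + 3/2) = M + 2 := by
    obtain ⟨hmem, hnear⟩ := hfl (M + 3/2)
    have hle : |M + 3/2 - fl (M + 3/2)| ≤ 1/2 := by
      have := hnear (M + 2) hM2F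
      calc |M + 3/2 - fl (M + 3/2)| ≤ |M + 3/2 - (M + 2)| := this
      _ = 1/2 := by rw [show M + 3/2 - (M + 2) = -(1/2) by ring]; norm_num
    have hlb : M + 1 ≤ fl (M + 3/2) := by
      have := abs_le.mp hle
      linarith [this.1, this.2]
    have hub : fl (M + 3/2) ≤ M + 2 := by
      have := abs_le.mp hle
      linarith [this.1, this.2]
    have hgt : M < fl (M + 3/2) := by linarith
    have := fp_gap p hp hmem (by rw [← hM]; exact hgt)
    rw [← hM] at this
    linarith
  -- step 2 of l : fl (M + 2 + -(3/4)) = M + 2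
  have hB : fl (M + 2 + -(3/4)) = M + 2 := by
    obtain ⟨hmem, hnear⟩ := hfl (M + 2 + -(3/4))
    have hle : |M + 2 + -(3/4) - fl (M + 2 + -(3/4))| ≤ 3/4 := by
      have := hnear (M + 2) hM2F
      calc |M + 2 + -(3/4) - fl (M + 2 + -(3/4))| ≤ |M + 2 + -(3/4) - (M + 2)| := this
      _ = 3/4 := by rw [show M + 2 + -(3/4) - (M + 2) = -(3/4) by ring]; norm_num
    have h' := abs_le.mp hle
    have hlb : M + 1/2 ≤ fl (M + 2 + -(3/4)) := by linarith [h'.1, h'.2]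
    have hub : fl (M + 2 + -(3/4)) ≤ M + 2 := by linarith [h'.1, h'.2]
    have hgt : M < fl (M + 2 + -(3/4)) := by linarith
    have := fp_gap p hp hmem (by rw [← hM]; exact hgt)
    rw [← hM] at this
    linarith
  -- steps of l'
  have hC : fl (3/2 + -(3/4)) = 3/4 := by
    rw [show (3/2 : ℝ) + -(3/4) = 3/4 by norm_num]
    exact fl_fixes hfl h34F
  have hD : fl (3/4 + M) < M + 2 := by
    obtain ⟨hmem, hnear⟩ := hfl (3/4 + M)
    have hle : |3/4 + M - fl (3/4 + M)| ≤ 3/4 := by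
      have := hnear M hMF
      calc |3/4 + M - fl (3/4 + M)| ≤ |3/4 + M - M| := this
      _ = 3/4 := by norm_num
    have h' := abs_le.mp hle
    linarith [h'.1, h'.2]
  refine ⟨[M, 3/2, -(3/4)], [3/2, -(3/4), M], ?_, ?_, ?_, ?_⟩
  · exact (List.Perm.swap (3/2) M [-(3/4)]).trans
      (List.Perm.cons (3/2) (List.Perm.swap (-(3/4)) M []))
  · intro x hx
    simp only [List.mem_cons, List.not_mem_nil, or_false] at hx
    rcases hx with rfl | rfl | rfl
    · exact hMF
    · exact h32F
    · exact hn34F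
  · refine List.pairwise_cons.mpr ⟨?_, List.pairwise_cons.mpr ⟨?_, List.pairwise_singleton _ _⟩⟩
    · intro b hb
      simp only [List.mem_cons, List.not_mem_nil, or_false] at hb
      rcases hb with rfl | rfl
      · rw [abs_of_nonneg (by norm_num : (0:ℝ) ≤ 3/2), abs_of_nonneg (by linarith : (0:ℝ) ≤ M)]
        linarith
      · rw [show |(-(3/4) : ℝ)| = 3/4 by norm_num, abs_of_nonneg (by linarith : (0:ℝ) ≤ M)]
        linarith
    · intro b hb
      simp only [List.mem_singleton] at hb
      subst hb
      rw [abs_neg, abs_of_nonneg (by norm_num : (0:ℝ) ≤ 3/4),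
        abs_of_nonneg (by norm_num : (0:ℝ) ≤ 3/2)]
      norm_num
  · have hl : lsum fl [M, 3/2, -(3/4)] = fl (fl (M + 3/2) + -(3/4)) := by
      simp [lsum]
    have hl' : lsum fl [3/2, -(3/4), M] = fl (fl (3/2 + -(3/4)) + M) := by
      simp [lsum]
    rw [hl, hl', hA, hB, hC]
    exact hD
end

section
/- Failure of widened-interval soundness across trees: for any fixed widening amount applied per operation, in a floating-point system with sufficiently small precision there exist representable inputs and trees o, o′ such that the widened interval evaluation of o does not contain the floating-point value of o′, provided the widening per operation is strictly less than the maximal cross-tree discrepancy. -/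
/-- Binary expression trees with real leaves. -/
inductive BTree (α : Type) : Type
  | leaf : α → BTree α
  | node : BTree α → BTree α → BTree α

/-- The list of leaf values of a tree (left-to-right). -/
def BTree.leaves {α : Type} : BTree α → List α
  | .leaf x => [x]
  | .node l r => l.leaves ++ r.leaves

/-- Evaluate a tree, applying the rounding function `fl` after each binary addition. -/
noncomputable def BTree.eval (fl : ℝ → ℝ) : BTree ℝ → ℝ
  | .leaf x => x
  | .node l r => fl (BTree.eval fl l + BTree.eval fl r)

/-- Interval evaluation of a tree with outward rounding:
leaves become singleton intervals, and `[a,b] ⊕ [c,d] = [rd (a+c), ru (b+d)]`. -/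
noncomputable def BTree.ieval (rd ru : ℝ → ℝ) : BTree ℝ → ℝ × ℝ
  | .leaf x => (x, x)
  | .node l r =>
      (rd ((BTree.ieval rd ru l).1 + (BTree.ieval rd ru r).1),
       ru ((BTree.ieval rd ru l).2 + (BTree.ieval rd ru r).2))
/-- Interval evaluation of a tree widened by a fixed margin `δ` at each operation:
`[a,b] ⊕_δ [c,d] = [rd (a+c) - δ, ru (b+d) + δ]`. -/
noncomputable def BTree.ievalW (rd ru : ℝ → ℝ) (δ : ℝ) : BTree ℝ → ℝ × ℝ
  | .leaf x => (x, x)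
  | .node l r =>
      (rd ((BTree.ievalW rd ru δ l).1 + (BTree.ievalW rd ru δ r).1) - δ,
       ru ((BTree.ievalW rd ru δ l).2 + (BTree.ievalW rd ru δ r).2) + δ)

lemma pow_mem_Fp (k : ℕ) : (2:ℝ)^k ∈ Fp 2 := by
  exact ⟨1, k, by norm_num, by push_cast [zpow_natCast]; ring⟩

lemma key (n : ℕ) (f : ℝ) (hf : f ∈ Fp 2)
    (h1 : 12 * 2^n < f) (h2 : f < 24 * 2^n) : f = 16 * 2^n := by
  obtain ⟨m, e, hm, rfl⟩ := hf
  have hm4 : |m| < 4 := by norm_num at hm; exact_mod_cast hm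
  obtain ⟨hml, hmu⟩ := abs_lt.mp hm4
  have h2npos : (0:ℝ) < 2^n := by positivity
  rcases le_or_gt (n:ℤ) e with h | h
  · set j : ℕ := (e - n).toNat with hj
    have hej : e = (n:ℤ) + j := by omega
    have hsplit : (2:ℝ)^e = 2^n * 2^j := by
      rw [hej, zpow_add₀ (by norm_num : (2:ℝ) ≠ 0)]
      norm_num [zpow_natCast]
    have hcast : (m:ℝ) * (2:ℝ)^e = ((m * 2^j : ℤ) : ℝ) * 2^n := by
      push_cast [hsplit]; ring
    rw [hcast] at h1 h2 ⊢
    have hK1 : (12:ℤ) < m * 2^j := by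
      have := (mul_lt_mul_iff_left₀ h2npos).mp (by linarith [h1] : (12:ℝ) * 2^n < ((m * 2^j : ℤ):ℝ) * 2^n)
      exact_mod_cast this
    have hK2 : m * 2^j < (24:ℤ) := by
      have := (mul_lt_mul_iff_left₀ h2npos).mp (by linarith [h2] : ((m * 2^j : ℤ):ℝ) * 2^n < 24 * 2^n)
      exact_mod_cast this
    have hjle : j ≤ 4 := by
      by_contra hcon
      push_neg at hcon
      have h32 : (32:ℤ) ≤ 2^j := by
        calc (32:ℤ) = 2^5 := by norm_num
        _ ≤ 2^j := pow_le_pow_right₀ (by norm_num) hcon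
      have hmpos : 1 ≤ m := by
        rcases le_or_gt 1 m with h' | h'
        · exact h'
        · nlinarith [pow_pos (by norm_num : (0:ℤ) < 2) j]
      nlinarith
    have : m * 2^j = 16 := by interval_cases j <;> omega
    rw [this]; norm_num
  · exfalso
    have he : e ≤ (n:ℤ) - 1 := by omega
    have h2e : (2:ℝ)^e ≤ (2:ℝ)^((n:ℤ)-1) :=
      zpow_le_zpow_right₀ (by norm_num) he
    have h2e' : (2:ℝ)^((n:ℤ)-1) = 2^n / 2 := by
      rw [sub_eq_add_neg, zpow_add₀ (by norm_num : (2:ℝ) ≠ 0)]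
      norm_num [zpow_natCast]; ring
    have hmr : (m:ℝ) ≤ 3 := by exact_mod_cast (by omega : (m:ℤ) ≤ 3)
    have hfle : (m:ℝ) * (2:ℝ)^e ≤ 3 * (2^n / 2) := by
      calc (m:ℝ) * (2:ℝ)^e ≤ 3 * (2:ℝ)^e := by
            have := zpow_pos (by norm_num : (0:ℝ) < 2) e
            nlinarith
      _ ≤ 3 * (2^n / 2) := by rw [← h2e']; nlinarith [h2e]
    linarith

/-- Failure of widened-interval soundness across trees: for any fixed per-operation
widening `δ`, there is a precision `p ≥ 2` such that (for round-to-nearest `fl` and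
directed roundings `rd`, `ru` into `Fp p`) some representable inputs and trees
`o`, `o'` over them exist for which the floating-point value of `o'` escapes the
`δ`-widened interval evaluation of `o`. -/
theorem widened_ibp_unsound_across_trees (δ : ℝ) (hδ : 0 ≤ δ) :
    ∃ p : ℕ, 2 ≤ p ∧ ∀ fl rd ru : ℝ → ℝ,
      IsNearestRounding (Fp p) fl →
      (∀ s : ℝ, IsGreatest {f | f ∈ Fp p ∧ f ≤ s} (rd s)) →
      (∀ s : ℝ, IsLeast {f | f ∈ Fp p ∧ s ≤ f} (ru s)) →
      ∃ (x : List ℝ) (o o' : BTree ℝ),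
        (∀ a ∈ x, a ∈ Fp p) ∧ o.leaves.Perm x ∧ o'.leaves.Perm x ∧
        (BTree.eval fl o' < (BTree.ievalW rd ru δ o).1 ∨
          (BTree.ievalW rd ru δ o).2 < BTree.eval fl o') := by
  obtain ⟨n, hn⟩ := exists_nat_gt δ
  have hδn : δ < 2^n := by
    have h2 : (n:ℝ) ≤ 2^n := by exact_mod_cast (Nat.lt_two_pow_self (n := n)).le
    linarith
  have h2npos : (0:ℝ) < 2^n := by positivity
  refine ⟨2, le_refl 2, ?_⟩
  intro fl rd ru hfl hrd hru
  set M : ℝ := 2^(n+4) with hMdef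
  set ε : ℝ := 2^(n+1) with hεdef
  have eM : M = 16 * 2^n := by rw [hMdef, pow_add]; ring
  have eε : ε = 2 * 2^n := by rw [hεdef, pow_add]; ring
  have hM : M ∈ Fp 2 := pow_mem_Fp _
  have hMneg : -M ∈ Fp 2 := ⟨-1, ((n+4 : ℕ) : ℤ), by norm_num, by
    rw [hMdef, zpow_natCast]; push_cast; ring⟩
  have hε : ε ∈ Fp 2 := pow_mem_Fp _
  have h0 : (0:ℝ) ∈ Fp 2 := ⟨0, 0, by norm_num, by norm_num⟩
  have hPn : (2:ℝ)^n ∈ Fp 2 := pow_mem_Fp _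
  -- fl 0 = 0
  have hfl0 : fl 0 = 0 := by
    have h := (hfl 0).2 0 h0
    simp only [sub_zero, sub_self, abs_zero] at h
    have := abs_nonneg (0 - fl 0)
    have habs : |0 - fl 0| = 0 := le_antisymm h this
    have := abs_eq_zero.mp habs
    linarith
  -- fl (M + ε) = M
  have hflM : fl (M + ε) = M := by
    have hmem := (hfl (M + ε)).1
    have hle := (hfl (M + ε)).2 M hM
    have heq : |M + ε - M| = ε := by
      rw [add_sub_cancel_left]; exact abs_of_pos (by rw [eε]; positivity)
    rw [heq] at hle
    obtain ⟨hl, hr⟩ := abs_le.mp hle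
    have h1 : 12 * 2^n < fl (M + ε) := by rw [eM, eε] at hl hr ⊢; linarith
    have h2 : fl (M + ε) < 24 * 2^n := by rw [eM, eε] at hl hr ⊢; linarith
    rw [key n _ hmem h1 h2, eM]
  -- rd 0 = 0
  have hrd0 : rd 0 = 0 := by
    have h := hrd 0
    have h1 : rd 0 ≤ 0 := h.1.2
    have h2 : (0:ℝ) ≤ rd 0 := h.2 ⟨h0, le_refl 0⟩
    linarith
  -- rd (ε - δ) ≥ 2^n
  have hrdε : (2:ℝ)^n ≤ rd (ε - δ) := by
    refine (hrd (ε - δ)).2 ⟨hPn, ?_⟩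
    rw [eε]; linarith
  refine ⟨[M, -M, ε],
    .node (.node (.leaf M) (.leaf (-M))) (.leaf ε),
    .node (.node (.leaf M) (.leaf ε)) (.leaf (-M)), ?_, ?_, ?_, ?_⟩
  · intro a ha
    simp only [List.mem_cons, List.not_mem_nil, or_false] at ha
    rcases ha with rfl | rfl | rfl
    exacts [hM, hMneg, hε]
  · simp only [BTree.leaves, List.cons_append, List.nil_append]
    exact List.Perm.refl _
  · simp only [BTree.leaves, List.cons_append, List.nil_append]
    exact List.Perm.cons M (List.Perm.swap (-M) ε [])
  · left
    simp only [BTree.eval, BTree.ievalW]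
    rw [hflM, add_neg_cancel, hfl0]
    rw [hrd0]
    have : (0 : ℝ) - δ + ε = ε - δ := by ring
    rw [this]
    linarith
end
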